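/- arXiv:2207.00955 — 2 statements merged into one kernel-verified Lean document; each statement's English description precedes it below -/
import Mathlib

section
/- Let H > 0 and let f : ℝ → ℝ be continuously differentiable with f(t) > 0 for all t, f(t) → c as t → −∞ for some c > 0, and f(t) = exp(H t) for all t ≥ t₀ for some t₀. Then for every q > 0, lim_{b → ∞} (1/((q+1)b)) ∫_{−b}^{q b} f'(t)/f(t) dt = qH/(q+1), a value lying strictly between 0 and H. -/
open Real Filter Topology intervalIntegral

/-- `Real.log` ignores the sign, so `log ∘ f` is an antiderivative of `f'/f` wherever `f ≠ 0`. -/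
theorem integral_deriv_div_self_eq_log_sub {f f' : ℝ → ℝ} {a b : ℝ}
    (hderiv : ∀ t ∈ Set.uIcc a b, HasDerivAt f (f' t) t)
    (hne : ∀ t ∈ Set.uIcc a b, f t ≠ 0)
    (hint : IntervalIntegrable (fun t => f' t / f t) MeasureTheory.volume a b) :
    ∫ t in a..b, f' t / f t = log (f b) - log (f a) :=
  integral_eq_sub_of_hasDerivAt (fun t ht => (hderiv t ht).log (hne t ht)) hint

theorem integral_deriv_div_self_eq_log_sub_of_contDiff {f : ℝ → ℝ} (hf : ContDiff ℝ 1 f)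
    (hne : ∀ t, f t ≠ 0) (a b : ℝ) :
    ∫ t in a..b, deriv f t / f t = log (f b) - log (f a) := by
  have hdiff : Differentiable ℝ f := hf.differentiable one_ne_zero
  have hcont : Continuous fun t => deriv f t / f t :=
    (hf.continuous_deriv le_rfl).div hdiff.continuous hne
  exact integral_deriv_div_self_eq_log_sub (fun t _ => (hdiff t).hasDerivAt)
    (fun t _ => hne t) (hcont.intervalIntegrable a b)

/-- For a loitering-then-de Sitter scale factor and any `q > 0`, the averaged
Hubble parameter over `[-b, q b]` tends to `q H / (q + 1)` as `b → ∞`, a value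
strictly between `0` and `H`. -/
theorem Havg_parameterized_limit (H : ℝ) (hH : 0 < H) (f : ℝ → ℝ)
    (hf : ContDiff ℝ 1 f) (hpos : ∀ t : ℝ, 0 < f t)
    (c : ℝ) (hc : 0 < c) (hlim : Tendsto f atBot (𝓝 c))
    (t₀ : ℝ) (hdS : ∀ t : ℝ, t₀ ≤ t → f t = Real.exp (H * t))
    (q : ℝ) (hq : 0 < q) :
    Tendsto (fun b : ℝ =>
        (1 / ((q + 1) * b)) * ∫ t in (-b)..(q * b), deriv f t / f t)
      atTop (𝓝 (q * H / (q + 1))) ∧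
    0 < q * H / (q + 1) ∧ q * H / (q + 1) < H := by
  have hq1 : 0 < q + 1 := by linarith
  have hlog : Tendsto (fun b => log (f (-b))) atTop (𝓝 (log c)) :=
    ((continuousAt_log hc.ne').tendsto.comp hlim).comp tendsto_neg_atTop_atBot
  -- only the de Sitter end grows linearly; the loitering end contributes `O(1) / b`
  have htail : Tendsto (fun b => log (f (-b)) / ((q + 1) * b)) atTop (𝓝 0) :=
    hlog.div_atTop (tendsto_id.const_mul_atTop hq1)
  have heq : ∀ᶠ b in atTop, q * H / (q + 1) - log (f (-b)) / ((q + 1) * b) =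
      (1 / ((q + 1) * b)) * ∫ t in (-b)..(q * b), deriv f t / f t := by
    filter_upwards [eventually_gt_atTop 0, eventually_ge_atTop (t₀ / q)] with b hb hbt
    have hqb : t₀ ≤ q * b := by rwa [div_le_iff₀' hq] at hbt
    rw [integral_deriv_div_self_eq_log_sub_of_contDiff hf fun t => (hpos t).ne', hdS _ hqb,
      log_exp]
    field_simp
  have hlimit : Tendsto (fun b => q * H / (q + 1) - log (f (-b)) / ((q + 1) * b)) atTop
      (𝓝 (q * H / (q + 1))) := by
    simpa using tendsto_const_nhds.sub htail
  refine ⟨hlimit.congr' heq, by positivity, ?_⟩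
  rw [div_lt_iff₀ hq1]
  linarith
end

section
/- Let H > 0, 0 < c < 1, and let f : ℝ → ℝ be continuously differentiable, monotone nondecreasing, with f(t) = c for all t ≤ −1 and f(t) = exp(H t) for all t ≥ 0. Then for every v ∈ (0, H] there exist real numbers a < b such that (1/(b−a)) ∫_a^b f'(t)/f(t) dt = v. -/
open Real Filter Topology intervalIntegral

/-! The average of `f'/f` over `[t, t + 1]` is `φ t = log f (t + 1) - log f t`, which is
continuous in `t` because `f` is continuous and positive (positivity comes from monotonicity
and `f = c > 0` in the past). Since `φ (-2) = 0` and `φ 0 = H`, the intermediate value theorem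
yields every `v ∈ [0, H]`. -/

theorem integral_deriv_div_eq_log_sub_log {f : ℝ → ℝ} (hf : ContDiff ℝ 1 f) {a b : ℝ}
    (hne : ∀ t ∈ Set.uIcc a b, f t ≠ 0) :
    ∫ t in a..b, deriv f t / f t = log (f b) - log (f a) :=
  integral_eq_sub_of_hasDerivAt
    (fun t ht => ((hf.differentiable one_ne_zero t).hasDerivAt).log (hne t ht))
    (((hf.continuous_deriv le_rfl).continuousOn.div hf.continuous.continuousOn
      hne).intervalIntegrable)

theorem Monotone.pos_of_eq_on_Iic {f : ℝ → ℝ} (hmono : Monotone f) {c t₀ : ℝ} (hc : 0 < c)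
    (hpast : ∀ t ≤ t₀, f t = c) (t : ℝ) : 0 < f t :=
  hc.trans_le <| hpast _ (min_le_right t t₀) ▸ hmono (min_le_left t t₀)

theorem Havg_realizes_Ioc_general (H c : ℝ) (hc0 : 0 < c)
    (f : ℝ → ℝ) (hf : ContDiff ℝ 1 f) (hmono : Monotone f)
    (hpast : ∀ t : ℝ, t ≤ -1 → f t = c)
    (hdS : ∀ t : ℝ, 0 ≤ t → f t = Real.exp (H * t))
    (v : ℝ) (hv : v ∈ Set.Ioc 0 H) :
    ∃ a b : ℝ, a < b ∧
      (1 / (b - a)) * ∫ t in a..b, deriv f t / f t = v := by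
  have hpos : ∀ t, 0 < f t := hmono.pos_of_eq_on_Iic hc0 hpast
  have hlog : Continuous fun t => log (f t) :=
    hf.continuous.log fun t => (hpos t).ne'
  have hφ : Continuous fun t => log (f (t + 1)) - log (f t) :=
    (hlog.comp (continuous_add_const 1)).sub hlog
  have hφ_past : log (f (-2 + 1)) - log (f (-2)) = 0 := by
    rw [hpast (-2 + 1) (by norm_num), hpast (-2) (by norm_num), sub_self]
  have hφ_dS : log (f (0 + 1)) - log (f 0) = H := by
    rw [hdS (0 + 1) (by norm_num), hdS 0 le_rfl, log_exp, log_exp]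
    ring
  have hv' : v ∈ Set.Icc (log (f (-2 + 1)) - log (f (-2))) (log (f (0 + 1)) - log (f 0)) := by
    rw [hφ_past, hφ_dS]
    exact Set.Ioc_subset_Icc_self hv
  obtain ⟨t, -, ht⟩ := intermediate_value_Icc (by norm_num) hφ.continuousOn hv'
  refine ⟨t, t + 1, lt_add_one t, ?_⟩
  rw [integral_deriv_div_eq_log_sub_log hf fun s _ => (hpos s).ne', add_sub_cancel_left,
    div_one, one_mul]
  exact ht

/-- For the loitering-then-de Sitter monster (constant `c` on `(-∞,-1]`,
`exp (H t)` on `[0,∞)`, monotone, `C¹`), the compact-interval averaged Hubble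
parameter realizes every value `v ∈ (0, H]` for a suitable interval `[a, b]`. -/
theorem Havg_realizes_Ioc (H c : ℝ) (hH : 0 < H) (hc0 : 0 < c) (hc1 : c < 1)
    (f : ℝ → ℝ) (hf : ContDiff ℝ 1 f) (hmono : Monotone f)
    (hpast : ∀ t : ℝ, t ≤ -1 → f t = c)
    (hdS : ∀ t : ℝ, 0 ≤ t → f t = Real.exp (H * t))
    (v : ℝ) (hv : v ∈ Set.Ioc 0 H) :
    ∃ a b : ℝ, a < b ∧
      (1 / (b - a)) * ∫ t in a..b, deriv f t / f t = v :=
  Havg_realizes_Ioc_general H c hc0 f hf hmono hpast hdS v hv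
end
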